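/- Let n be a positive natural number, A an n×n real matrix, and i, j indices. Then the function t ↦ det(A + t·E_{ij}), where E_{ij} is the matrix with a 1 in position (i,j) and 0 elsewhere, is differentiable at t = 0 with derivative equal to the (j,i) entry of the adjugate of A, i.e. ∂det(A)/∂A_{ij} = [adjᵀ(A)]_{ij} = adj(A)_{ji}. -/

import Mathlib

namespace Matrix

variable {n : Type*} [DecidableEq n]

theorem add_single_eq_updateRow {α : Type*} [AddZeroClass α] (A : Matrix n n α) (i j : n)
    (c : α) : A + single i j c = A.updateRow i (A i + Pi.single j c) := by
  ext k l
  rcases eq_or_ne k i with rfl | hk <;> simp [single_eq_updateRow_zero, *]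

theorem det_add_single [Fintype n] {R : Type*} [CommRing R] (A : Matrix n n R) (i j : n) (c : R) :
    (A + single i j c).det = A.det + c * adjugate A j i := by
  have hrow : (Pi.single j c : n → R) = c • Pi.single j 1 := by
    rw [← Pi.single_smul', smul_eq_mul, mul_one]
  rw [add_single_eq_updateRow, det_updateRow_add, updateRow_eq_self, hrow, det_updateRow_smul,
    ← adjugate_apply]

theorem hasDerivAt_det_add_smul_single [Fintype n] {𝕜 : Type*} [NontriviallyNormedField 𝕜]
    (A : Matrix n n 𝕜) (i j : n) (x : 𝕜) :
    HasDerivAt (fun t : 𝕜 => (A + t • single i j (1 : 𝕜)).det) (adjugate A j i) x := by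
  simp only [smul_single, smul_eq_mul, mul_one, det_add_single]
  simpa using ((hasDerivAt_id x).mul_const (adjugate A j i)).const_add A.det

end Matrix

theorem deriv_det_entry_eq_adjugate_general
    (n : ℕ) (A : Matrix (Fin n) (Fin n) ℝ) (i j : Fin n) :
    HasDerivAt (fun t : ℝ => (A + t • Matrix.single i j (1 : ℝ)).det)
      (Matrix.adjugate A j i) 0 :=
  Matrix.hasDerivAt_det_add_smul_single A i j 0

/-- The partial derivative of the determinant with respect to the single entry
`A i j` is the `(j, i)` entry of the adjugate: the function
`t ↦ det (A + t • E i j)` has derivative `adj(A) j i` at `t = 0`. -/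
theorem deriv_det_entry_eq_adjugate
    (n : ℕ) (hn : 0 < n) (A : Matrix (Fin n) (Fin n) ℝ) (i j : Fin n) :
    HasDerivAt (fun t : ℝ => (A + t • Matrix.single i j (1 : ℝ)).det)
      (Matrix.adjugate A j i) 0 :=
  deriv_det_entry_eq_adjugate_general n A i j
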